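/- Let G(p) be a chordal bar framework on n vertices in R^r with r̄ = n−r−1 ≥ 1, and assume that 1,2,...,n is a perfect elimination ordering of G. If Z is a Gale matrix of G(p) satisfying Property (A), then S = Z Z^T is a positive semidefinite stress matrix of G(p) of rank r̄. In particular, G(p) admits a positive semidefinite stress matrix of rank r̄. -/

import Mathlib

/-!
Under Property (A), column `k` of `Z` is supported on vertex `k` and its higher-indexed
neighbours, which together form a clique because `1, …, n` is a perfect elimination ordering.
Hence `(Z Zᵀ)ᵢⱼ = ∑ₖ zᵢₖ zⱼₖ` vanishes whenever `i ≠ j` are non-adjacent. The columns of `Z` lie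
in the kernel of `𝒫`, so `𝒫 (Z Zᵀ) = 0`; for a symmetric matrix supported on `G` this says
exactly that `ωᵢⱼ = -sᵢⱼ` is an equilibrium stress. Positive semidefiniteness and rank `r̄`
hold for any Gram matrix `Z Zᵀ` with linearly independent columns.
-/

open Matrix
open scoped Classical

noncomputable section

/-- The configuration `p` affinely spans `ℝ^r`. -/
def AffinelySpans {n r : ℕ} (p : Fin n → EuclideanSpace ℝ (Fin r)) : Prop :=
  affineSpan ℝ (Set.range p) = ⊤

/-- The configuration `p` is in general position in `ℝ^r`: every `r+1` of the
points are affinely independent. -/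
def InGeneralPosition {n r : ℕ} (p : Fin n → EuclideanSpace ℝ (Fin r)) : Prop :=
  ∀ s : Finset (Fin n), s.card = r + 1 →
    AffineIndependent ℝ (fun i : s => p (i : Fin n))

/-- Frameworks `G(p)` and `G(q)` are equivalent: corresponding edges have equal lengths. -/
def FrameworksEquivalent {n r s : ℕ} (G : SimpleGraph (Fin n))
    (p : Fin n → EuclideanSpace ℝ (Fin r)) (q : Fin n → EuclideanSpace ℝ (Fin s)) : Prop :=
  ∀ i j : Fin n, G.Adj i j → ‖q i - q j‖ = ‖p i - p j‖

/-- Frameworks `G(p)` and `G(q)` are congruent: all pairwise distances agree. -/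
def FrameworksCongruent {n r s : ℕ}
    (p : Fin n → EuclideanSpace ℝ (Fin r)) (q : Fin n → EuclideanSpace ℝ (Fin s)) : Prop :=
  ∀ i j : Fin n, ‖q i - q j‖ = ‖p i - p j‖

/-- `G(p)` is universally rigid. -/
def UniversallyRigid {n r : ℕ} (G : SimpleGraph (Fin n))
    (p : Fin n → EuclideanSpace ℝ (Fin r)) : Prop :=
  ∀ (s : ℕ) (q : Fin n → EuclideanSpace ℝ (Fin s)),
    FrameworksEquivalent G p q → FrameworksCongruent p q

/-- `G(p)` is globally rigid. -/
def GloballyRigid {n r : ℕ} (G : SimpleGraph (Fin n))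
    (p : Fin n → EuclideanSpace ℝ (Fin r)) : Prop :=
  ∀ q : Fin n → EuclideanSpace ℝ (Fin r),
    FrameworksEquivalent G p q → FrameworksCongruent p q

/-- `ω` is an equilibrium stress of `G(p)`. -/
def IsEquilibriumStress {n r : ℕ} (G : SimpleGraph (Fin n))
    (p : Fin n → EuclideanSpace ℝ (Fin r)) (ω : Fin n → Fin n → ℝ) : Prop :=
  (∀ i j, ω i j = ω j i) ∧
  ∀ i : Fin n, ∑ j ∈ Finset.univ.filter (fun j => G.Adj i j), ω i j • (p i - p j) = 0

/-- `S` is the stress matrix of `G(p)` associated to some equilibrium stress `ω`. -/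
def IsStressMatrix {n r : ℕ} (G : SimpleGraph (Fin n))
    (p : Fin n → EuclideanSpace ℝ (Fin r)) (S : Matrix (Fin n) (Fin n) ℝ) : Prop :=
  ∃ ω : Fin n → Fin n → ℝ, IsEquilibriumStress G p ω ∧
    (∀ i j : Fin n, G.Adj i j → S i j = - ω i j) ∧
    (∀ i j : Fin n, i ≠ j → ¬ G.Adj i j → S i j = 0) ∧
    (∀ i : Fin n, S i i = ∑ j ∈ Finset.univ.filter (fun j => G.Adj i j), ω i j)

/-- `G` is `k`-vertex connected: either `G` is the complete graph on `k+1` vertices, or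
`n ≥ k+2` and the deletion of any `k-1` vertices leaves `G` connected. -/
def IsKVertexConnected {n : ℕ} (k : ℕ) (G : SimpleGraph (Fin n)) : Prop :=
  (n = k + 1 ∧ G = ⊤) ∨
  (k + 2 ≤ n ∧ ∀ X : Finset (Fin n), X.card = k - 1 →
    (G.induce ((X : Set (Fin n))ᶜ)).Connected)

/-- `G` is chordal: every cycle of length at least 4 has a chord, i.e. an edge of `G`
joining two vertices of the cycle which is not an edge of the cycle. -/
def IsChordal {V : Type*} (G : SimpleGraph V) : Prop :=
  ∀ (v : V) (c : G.Walk v v), c.IsCycle → 4 ≤ c.length →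
    ∃ u w : V, u ∈ c.support ∧ w ∈ c.support ∧ G.Adj u w ∧ s(u, w) ∉ c.edges

/-- The natural ordering `1, 2, ..., n` (i.e. the order on `Fin n`) is a perfect
elimination ordering of `G`: the higher-indexed neighbours of each vertex form a clique. -/
def IsNatPEO {n : ℕ} (G : SimpleGraph (Fin n)) : Prop :=
  ∀ i j k : Fin n, i < j → i < k → j ≠ k → G.Adj i j → G.Adj i k → G.Adj j k

/-- The extended configuration matrix `𝒫` of `G(p)`: its `j`-th column is `(pʲ ; 1)`. -/
def extConfig {n r : ℕ} (p : Fin n → EuclideanSpace ℝ (Fin r)) :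
    Matrix (Fin (r + 1)) (Fin n) ℝ :=
  fun i j => if h : (i : ℕ) < r then p j ⟨(i : ℕ), h⟩ else 1

/-- `Z` is a Gale matrix of `G(p)`: its columns form a basis of the null space of the
extended configuration matrix of `G(p)`. -/
def IsGaleMatrix {n r : ℕ} (p : Fin n → EuclideanSpace ℝ (Fin r))
    (Z : Matrix (Fin n) (Fin (n - r - 1)) ℝ) : Prop :=
  extConfig p * Z = 0 ∧
  LinearIndependent ℝ (fun k : Fin (n - r - 1) => Zᵀ k) ∧
  ∀ x : Fin n → ℝ, extConfig p *ᵥ x = 0 →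
    x ∈ Submodule.span ℝ (Set.range fun k : Fin (n - r - 1) => Zᵀ k)

/-- Property (A) of a Gale matrix `Z` (with respect to the PEO `1, 2, ..., n` of `G`):
`z_ii = 1` for `i ≤ n-r-1`, `z_ij = 0` for `i < j`, and `z_ij = 0` whenever `i > j` and
`(i,j)` is not an edge of `G`. -/
def PropertyA {n r : ℕ} (G : SimpleGraph (Fin n))
    (Z : Matrix (Fin n) (Fin (n - r - 1)) ℝ) : Prop :=
  (∀ (i : Fin n) (h : (i : ℕ) < n - r - 1), Z i ⟨(i : ℕ), h⟩ = 1) ∧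
  (∀ (i : Fin n) (j : Fin (n - r - 1)), (i : ℕ) < (j : ℕ) → Z i j = 0) ∧
  (∀ (i : Fin n) (j : Fin (n - r - 1)), (j : ℕ) < (i : ℕ) →
    ¬ G.Adj i (Fin.castLE (by omega) j) → Z i j = 0)

/-- A symmetric matrix of rank `k` has generic rank profile if its first `k` leading
principal minors are nonzero. -/
def HasGenericRankProfile {n : ℕ} (A : Matrix (Fin n) (Fin n) ℝ) (k : ℕ) : Prop :=
  ∀ t : ℕ, 0 < t → t ≤ k → ∀ h : t ≤ n,
    (A.submatrix (Fin.castLE h) (Fin.castLE h)).det ≠ 0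


/-- `G` is an `(r+1)`-lateration graph: there is an ordering `v 0, ..., v (n-1)` of the
vertices such that the first `r+2` vertices induce a clique and every later vertex is
adjacent to at least `r+1` of the preceding vertices. -/
def IsLaterationGraph {n : ℕ} (r : ℕ) (G : SimpleGraph (Fin n)) : Prop :=
  ∃ v : Fin n ≃ Fin n,
    (∀ i j : Fin n, (i : ℕ) < r + 2 → (j : ℕ) < r + 2 → i ≠ j → G.Adj (v i) (v j)) ∧
    ∀ j : Fin n, r + 2 ≤ (j : ℕ) →
      r + 1 ≤ (Finset.univ.filter fun i : Fin n =>
        (i : ℕ) < (j : ℕ) ∧ G.Adj (v i) (v j)).card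

/-- `gaussElim A t` is the matrix obtained from `A` after `t` steps of Gauss elimination
(the `t`-th step zeroes out the entries below the pivot in position `(t,t)`,
1-indexed, and normalizes the pivot row). -/
def gaussElim {n : ℕ} (A : Matrix (Fin n) (Fin n) ℝ) : ℕ → Matrix (Fin n) (Fin n) ℝ
  | 0 => A
  | t + 1 =>
    let B := gaussElim A t
    if h : t < n then
      let piv : Fin n := ⟨t, h⟩
      fun i j =>
        if (i : ℕ) < t then B i j
        else if (i : ℕ) = t then B i j / B piv piv
        else if (j : ℕ) ≤ t then 0
        else B i j - B i piv * B piv j / B piv piv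
    else B

theorem Finset.sum_eq_add_sum_filter_adj {V M : Type*} [Fintype V] [AddCommMonoid M]
    (G : SimpleGraph V) (i : V) (f : V → M) (hf : ∀ j, j ≠ i → ¬G.Adj i j → f j = 0) :
    ∑ j, f j = f i + ∑ j ∈ Finset.univ.filter (fun j => G.Adj i j), f j := by
  rw [← Finset.sum_filter_not_add_sum_filter Finset.univ (fun j => G.Adj i j)]
  congr 1
  refine Finset.sum_eq_single_of_mem i (by simp) fun j hj hji => hf j hji ?_
  exact (Finset.mem_filter.mp hj).2

theorem extConfig_mulVec_eq_zero_iff {n r : ℕ} (p : Fin n → EuclideanSpace ℝ (Fin r))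
    (x : Fin n → ℝ) :
    extConfig p *ᵥ x = 0 ↔ ∑ j, x j = 0 ∧ ∑ j, x j • p j = 0 := by
  rw [funext_iff, Fin.forall_fin_succ', and_comm]
  refine and_congr ?_ ?_
  · simp [mulVec, dotProduct, extConfig]
  · rw [PiLp.ext_iff]
    refine forall_congr' fun c => ?_
    simp [mulVec, dotProduct, extConfig, mul_comm]

theorem IsNatPEO.adj_of_eq_or_later_adj {n : ℕ} {G : SimpleGraph (Fin n)} (hpeo : IsNatPEO G)
    {v x y : Fin n} (hx : x = v ∨ v < x ∧ G.Adj v x) (hy : y = v ∨ v < y ∧ G.Adj v y)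
    (hxy : x ≠ y) : G.Adj x y := by
  rcases hx with rfl | ⟨hvx, hax⟩ <;> rcases hy with rfl | ⟨hvy, hay⟩
  · exact absurd rfl hxy
  · exact hay
  · exact hax.symm
  · exact hpeo v x y hvx hvy hxy hax hay

theorem IsNatPEO.mul_transpose_apply_eq_zero {n : ℕ} {ι R : Type*} [Fintype ι]
    [NonUnitalNonAssocSemiring R] {G : SimpleGraph (Fin n)} (hpeo : IsNatPEO G)
    (Z : Matrix (Fin n) ι R) (c : ι → Fin n)
    (hZ : ∀ i k, Z i k ≠ 0 → i = c k ∨ c k < i ∧ G.Adj (c k) i)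
    {i j : Fin n} (hij : i ≠ j) (hadj : ¬G.Adj i j) : (Z * Zᵀ) i j = 0 := by
  rw [mul_apply]
  refine Finset.sum_eq_zero fun k _ => ?_
  by_cases hi : Z i k = 0
  · rw [hi, zero_mul]
  by_cases hj : Z j k = 0
  · rw [transpose_apply, hj, mul_zero]
  exact absurd (hpeo.adj_of_eq_or_later_adj (hZ i k hi) (hZ j k hj) hij) hadj

theorem PropertyA.eq_or_later_adj_of_ne_zero {n r : ℕ} {G : SimpleGraph (Fin n)}
    {Z : Matrix (Fin n) (Fin (n - r - 1)) ℝ} (hA : PropertyA G Z) {i : Fin n}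
    {k : Fin (n - r - 1)} (hik : Z i k ≠ 0) :
    i = Fin.castLE (by omega) k ∨
      Fin.castLE (by omega) k < i ∧ G.Adj (Fin.castLE (by omega) k) i := by
  rcases lt_trichotomy (i : ℕ) k with h | h | h
  · exact absurd (hA.2.1 i k h) hik
  · exact Or.inl (Fin.ext h)
  · exact Or.inr ⟨h, (not_not.mp fun hn => hik (hA.2.2 i k h hn)).symm⟩

theorem isStressMatrix_of_isSymm_of_extConfig_mul_eq_zero {n r : ℕ} (G : SimpleGraph (Fin n))
    (p : Fin n → EuclideanSpace ℝ (Fin r)) {S : Matrix (Fin n) (Fin n) ℝ} (hS : S.IsSymm)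
    (hker : extConfig p * S = 0) (hsupp : ∀ i j, i ≠ j → ¬G.Adj i j → S i j = 0) :
    IsStressMatrix G p S := by
  have hrow (i : Fin n) : ∑ j, S i j = 0 ∧ ∑ j, S i j • p j = 0 := by
    refine (extConfig_mulVec_eq_zero_iff p (S i)).mp (funext fun c => ?_)
    simpa [mulVec, dotProduct, mul_apply, hS.apply] using congrFun (congrFun hker c) i
  have hdiag (i : Fin n) : ∑ j ∈ Finset.univ.filter (fun j => G.Adj i j), -S i j = S i i := by
    have h := Finset.sum_eq_add_sum_filter_adj G i (S i) fun j hji hij => hsupp i j hji.symm hij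
    rw [(hrow i).1] at h
    rw [Finset.sum_neg_distrib]
    linear_combination h
  refine ⟨fun i j => -S i j, ⟨fun i j => congrArg Neg.neg (hS.apply i j).symm, fun i => ?_⟩,
    fun i j _ => (neg_neg _).symm, hsupp, fun i => (hdiag i).symm⟩
  have h := Finset.sum_eq_add_sum_filter_adj G i (fun j => S i j • p j) fun j hji hij => by
    rw [hsupp i j hji.symm hij, zero_smul]
  calc ∑ j ∈ Finset.univ.filter (fun j => G.Adj i j), -S i j • (p i - p j)
      = (∑ j ∈ Finset.univ.filter (fun j => G.Adj i j), -S i j) • p i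
          + ∑ j ∈ Finset.univ.filter (fun j => G.Adj i j), S i j • p j := by
        rw [Finset.sum_smul, ← Finset.sum_add_distrib]
        exact Finset.sum_congr rfl fun j _ => by module
    _ = 0 := by rw [hdiag, ← h, (hrow i).2]

theorem stmt13_propertyA_gives_psd_stress_general
    {n r : ℕ} (G : SimpleGraph (Fin n)) (p : Fin n → EuclideanSpace ℝ (Fin r))
    (hpeo : IsNatPEO G)
    (Z : Matrix (Fin n) (Fin (n - r - 1)) ℝ) (hZ : IsGaleMatrix p Z)
    (hA : PropertyA G Z) :
    (IsStressMatrix G p (Z * Zᵀ) ∧ (Z * Zᵀ).PosSemidef ∧ (Z * Zᵀ).rank = n - r - 1) ∧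
    ∃ S : Matrix (Fin n) (Fin n) ℝ,
      IsStressMatrix G p S ∧ S.PosSemidef ∧ S.rank = n - r - 1 := by
  have hstress : IsStressMatrix G p (Z * Zᵀ) :=
    isStressMatrix_of_isSymm_of_extConfig_mul_eq_zero G p
      (by rw [IsSymm, transpose_mul, transpose_transpose])
      (by rw [← Matrix.mul_assoc, hZ.1, Matrix.zero_mul])
      fun i j => hpeo.mul_transpose_apply_eq_zero Z _ fun i k => hA.eq_or_later_adj_of_ne_zero
  have hpsd : (Z * Zᵀ).PosSemidef := by
    simpa using posSemidef_self_mul_conjTranspose Z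
  have hrank : (Z * Zᵀ).rank = n - r - 1 := by
    rw [rank_self_mul_transpose, ← rank_transpose]
    exact hZ.2.1.rank_matrix.trans (Fintype.card_fin _)
  exact ⟨⟨hstress, hpsd, hrank⟩, _, hstress, hpsd, hrank⟩

/-- If a chordal bar framework `G(p)` (with `1, ..., n` a PEO of `G` and
`r̄ = n - r - 1 ≥ 1`) admits a Gale matrix `Z` satisfying Property (A), then
`S = Z Zᵀ` is a positive semidefinite stress matrix of `G(p)` of rank `r̄`; in
particular `G(p)` admits a positive semidefinite stress matrix of rank `r̄`. -/
theorem stmt13_propertyA_gives_psd_stress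
    {n r : ℕ} (G : SimpleGraph (Fin n)) (p : Fin n → EuclideanSpace ℝ (Fin r))
    (hconn : G.Connected) (hspan : AffinelySpans p)
    (hchord : IsChordal G) (hpeo : IsNatPEO G) (hr : 1 ≤ n - r - 1)
    (Z : Matrix (Fin n) (Fin (n - r - 1)) ℝ) (hZ : IsGaleMatrix p Z)
    (hA : PropertyA G Z) :
    (IsStressMatrix G p (Z * Zᵀ) ∧ (Z * Zᵀ).PosSemidef ∧ (Z * Zᵀ).rank = n - r - 1) ∧
    ∃ S : Matrix (Fin n) (Fin n) ℝ,
      IsStressMatrix G p S ∧ S.PosSemidef ∧ S.rank = n - r - 1 :=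
  stmt13_propertyA_gives_psd_stress_general G p hpeo Z hZ hA

end
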